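/- Suppose suppliers are ordered by the greedy rule using keys S_i + g_i - c_i (strictly decreasing), with capacity T and quotas L_i ∈ [0, D_i] for all i, and let the quota-adjusted problem have capacity T̂ = T - Σ_i L_i and bounds D̂_i = D_i - L_i. If T - T̂ > Σ_{i ∈ G1 ∪ G2} L_i, where G1 (resp. G2) is the set of fully (resp. partially) served suppliers in the original greedy allocation with capacity T and bounds D_i, then the set of fully served suppliers in the quota-adjusted greedy allocation is a subset of G1. -/

import Mathlib

open Finset

/-- Greedy allocation with capacity `T`, items in index order (assumed sorted by
strictly decreasing keys `S i + g i - c i`). -/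
noncomputable def greedyAlloc17 (n : ℕ) (D : Fin n → ℝ) (T : ℝ) (i : Fin n) : ℝ :=
  min (D i) (max 0 (T - ∑ j ∈ Finset.univ.filter (fun j => j < i), D j))

/-- If the capacity removed by the quotas exceeds the total quota guaranteed to the
fully and partially served suppliers (`T - T̂ > ∑_{i ∈ G1 ∪ G2} L i`), then any supplier
fully served in the quota-adjusted greedy allocation (capacity `T̂ = T - ∑ L i`, bounds
`D i - L i`) was already fully served originally: the `G1` category does not expand. -/
theorem stmt17 (n : ℕ) (D L S g c : Fin n → ℝ) (T : ℝ)
    (hkey : ∀ i j : Fin n, i < j → S j + g j - c j < S i + g i - c i)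
    (hkeypos : ∀ i, 0 < S i + g i - c i)
    (hD : ∀ i, 0 < D i) (hL : ∀ i, 0 ≤ L i ∧ L i < D i)
    (G1 G2 : Finset (Fin n))
    (hG1 : G1 = Finset.univ.filter (fun i => greedyAlloc17 n D T i = D i))
    (hG2 : G2 = Finset.univ.filter
      (fun i => 0 < greedyAlloc17 n D T i ∧ greedyAlloc17 n D T i < D i))
    (That : ℝ) (hThat : That = T - ∑ i, L i)
    (hcond : ∑ i ∈ G1 ∪ G2, L i < T - That) :
    ∀ i : Fin n, greedyAlloc17 n (fun j => D j - L j) That i = D i - L i → i ∈ G1 := by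
  intro i hi
  have hDLpos : 0 < D i - L i := by linarith [(hL i).2]
  unfold greedyAlloc17 at hi
  have h1 : D i - L i ≤ max 0 (That - ∑ j ∈ Finset.univ.filter (fun j => j < i),
      (D j - L j)) := min_eq_left_iff.mp hi
  have h2 : D i - L i ≤ That - ∑ j ∈ Finset.univ.filter (fun j => j < i), (D j - L j) := by
    by_contra h
    push_neg at h
    have := max_lt hDLpos h
    linarith
  have hsub : ∑ j ∈ Finset.univ.filter (fun j => j < i), (D j - L j)
      = ∑ j ∈ Finset.univ.filter (fun j => j < i), D j
        - ∑ j ∈ Finset.univ.filter (fun j => j < i), L j :=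
    Finset.sum_sub_distrib _ _
  have hsplit : ∑ j ∈ Finset.univ.filter (fun j => j < i), L j
      + ∑ j ∈ Finset.univ.filter (fun j => ¬ j < i), L j = ∑ j, L j :=
    Finset.sum_filter_add_sum_filter_not _ _ _
  have hone : L i ≤ ∑ j ∈ Finset.univ.filter (fun j => ¬ j < i), L j :=
    Finset.single_le_sum (fun j _ => (hL j).1) (by simp)
  have hfull : greedyAlloc17 n D T i = D i := by
    unfold greedyAlloc17
    refine min_eq_left ?_
    refine le_max_of_le_right ?_
    rw [hsub] at h2
    linarith
  rw [hG1]
  simp [hfull]
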